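/- Let μ = (2/9)δ_{-3} + (4/9)δ_0 + (1/3)δ_2, let ρ = inf{n ≥ 0 : X_n ∉ (−1,2)} and τ = inf{n ≥ ρ : X_n ∉ (−3,0)}. Then τ < ∞ a.s., X_τ has law μ, the stopped process (X_{n∧τ})_{n≥0} is a uniformly integrable martingale, and the barycentre value Ψ_μ(0) = (Σ_{n≥0} n·μ({n}))/μ([0,∞)) equals 6/7 (in particular it is not an integer). -/

import Mathlib

open MeasureTheory ProbabilityTheory Filter Set
open scoped ENNReal NNReal Topology

noncomputable section

namespace RWSkorokhod

variable {Ω : Type*} [MeasurableSpace Ω]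

/-- The simple symmetric random walk `X n = ξ 1 + ⋯ + ξ n` built from the steps `ξ`. -/
def walk (ξ : ℕ → Ω → ℤ) (n : ℕ) (ω : Ω) : ℤ :=
  ∑ k ∈ Finset.Icc 1 n, ξ k ω

/-- `ξ` is a sequence of i.i.d. symmetric `±1` steps under the probability measure `P`. -/
structure IsSSRW (P : Measure Ω) (ξ : ℕ → Ω → ℤ) : Prop where
  isProb : IsProbabilityMeasure P
  meas : ∀ k, Measurable (ξ k)
  indep : iIndepFun ξ P
  up : ∀ k, P {ω | ξ k ω = 1} = 1 / 2
  down : ∀ k, P {ω | ξ k ω = -1} = 1 / 2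

lemma measurable_walk (ξ : ℕ → Ω → ℤ) (hm : ∀ k, Measurable (ξ k)) (n : ℕ) :
    Measurable (walk ξ n) :=
  Finset.measurable_sum _ fun k _ => hm k

/-- The natural filtration of the random walk: `F n = σ(X 0, …, X n)`. -/
def natFilt (ξ : ℕ → Ω → ℤ) (hm : ∀ k, Measurable (ξ k)) :
    Filtration ℕ ‹MeasurableSpace Ω› where
  seq n := ⨆ k ∈ Set.Iic n, MeasurableSpace.comap (walk ξ k) inferInstance
  mono' i _ hij := biSup_mono fun k (hk : k ∈ Set.Iic i) => le_trans hk hij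
  le' _ := iSup₂_le fun k _ => (measurable_walk ξ hm k).comap_le

/-- `τ` is an (extended-natural-number valued) stopping time for the filtration `F`. -/
def IsStop (F : Filtration ℕ ‹MeasurableSpace Ω›) (τ : Ω → ℕ∞) : Prop :=
  ∀ n : ℕ, MeasurableSet[F n] {ω | τ ω ≤ (n : ℕ∞)}

/-- `τ` is almost surely finite. -/
def AEFinite (P : Measure Ω) (τ : Ω → ℕ∞) : Prop :=
  ∀ᵐ ω ∂P, τ ω < ⊤

/-- The value `X_τ` of the walk at the stopping time `τ` (junk on `{τ = ∞}`). -/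
def stopVal (ξ : ℕ → Ω → ℤ) (τ : Ω → ℕ∞) (ω : Ω) : ℤ :=
  walk ξ (τ ω).toNat ω

/-- The stopped process `X_{n ∧ τ}`, viewed as a real-valued process. -/
def stopProc (ξ : ℕ → Ω → ℤ) (τ : Ω → ℕ∞) (n : ℕ) (ω : Ω) : ℝ :=
  ((walk ξ (min (n : ℕ∞) (τ ω)).toNat ω : ℤ) : ℝ)

/-- `τ` embeds the measure `μ` : the law of `X_τ` under `P` is `μ`. -/
def Embeds (P : Measure Ω) (ξ : ℕ → Ω → ℤ) (τ : Ω → ℕ∞) (μ : Measure ℤ) : Prop :=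
  Measure.map (stopVal ξ τ) P = μ

/-- `τ` is a UI stopping time: an a.s. finite stopping time of the natural filtration such
that the stopped process `(X_{n ∧ τ})` is a uniformly integrable martingale. -/
def IsUIStop (P : Measure Ω) (ξ : ℕ → Ω → ℤ) (hm : ∀ k, Measurable (ξ k))
    (τ : Ω → ℕ∞) : Prop :=
  IsStop (natFilt ξ hm) τ ∧ AEFinite P τ ∧
    Martingale (stopProc ξ τ) (natFilt ξ hm) P ∧
    UniformIntegrable (stopProc ξ τ) 1 P

/-- The set `M₀^UI` of probability measures on `ℤ` which can be embedded in the random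
walk by a UI stopping time of its natural filtration. -/
def MUI (P : Measure Ω) (ξ : ℕ → Ω → ℤ) (hm : ∀ k, Measurable (ξ k)) : Set (Measure ℤ) :=
  {μ | ∃ τ : Ω → ℕ∞, IsUIStop P ξ hm τ ∧ Embeds P ξ τ μ}

/-- A centered probability measure on `ℤ`: finite first moment and mean zero. -/
def Centered (μ : Measure ℤ) : Prop :=
  IsProbabilityMeasure μ ∧ Integrable (fun n : ℤ => (n : ℝ)) μ ∧
    (∫ n : ℤ, (n : ℝ) ∂μ) = 0

/-- `τ` is a minimal stopping time: any stopping time `σ ≤ τ` a.s. with `X_σ ∼ X_τ`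
equals `τ` a.s. -/
def Minimal (P : Measure Ω) (ξ : ℕ → Ω → ℤ) (hm : ∀ k, Measurable (ξ k))
    (τ : Ω → ℕ∞) : Prop :=
  ∀ σ : Ω → ℕ∞, IsStop (natFilt ξ hm) σ → (∀ᵐ ω ∂P, σ ω ≤ τ ω) →
    Measure.map (stopVal ξ σ) P = Measure.map (stopVal ξ τ) P → σ =ᵐ[P] τ

/-- The measure `μ_p = p δ₀ + ((1-p)/2)(δ₋₂ + δ₂)` on `ℤ`. -/
def muP (p : ℝ) : Measure ℤ :=
  ENNReal.ofReal p • Measure.dirac 0 +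
    ENNReal.ofReal ((1 - p) / 2) • (Measure.dirac (-2) + Measure.dirac 2)

/-- The set `S` of `p ∈ [0,1]` such that `μ_p` admits a UI embedding. -/
def Sset (P : Measure Ω) (ξ : ℕ → Ω → ℤ) (hm : ∀ k, Measurable (ξ k)) : Set ℝ :=
  {p | p ∈ Set.Icc (0 : ℝ) 1 ∧ muP p ∈ MUI P ξ hm}

/-- The exit time `H_N = inf {n : X n ∉ [-N, N]}`. -/
def exitTime (ξ : ℕ → Ω → ℤ) (N : ℕ) (ω : Ω) : ℕ∞ :=
  ⨅ (n : ℕ) (_ : walk ξ n ω ∉ Set.Icc (-(N : ℤ)) (N : ℤ)), (n : ℕ∞)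


/-!
Both exit times keep the walk inside `[-3, 2]`, so the stopped walks are bounded martingales.
A bounded martingale converges almost surely while the walk moves by `±1` at every step, hence
`ρ` and `τ` are almost surely finite, and dominated convergence gives `E X_ρ = E X_τ = 0`.
Since `X_ρ ∈ {-1, 2}`, this forces `P(X_ρ = 2) = 1/3`. Since `X_τ ∈ {-3, 0, 2}` and
`{X_τ = 2} = {X_ρ = 2}`, the equation `E X_τ = 0` then gives `P(X_τ = -3) = 2/9`, and
`P(X_τ = 0) = 4/9` is what remains.
-/

lemma iInf_natCast_le_natCast_iff {p : ℕ → Prop} {m : ℕ} :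
    ⨅ (n : ℕ) (_ : p n), (n : ℕ∞) ≤ m ↔ ∃ n ≤ m, p n := by
  constructor
  · intro h
    by_contra! hp
    have : ((m + 1 : ℕ) : ℕ∞) ≤ ⨅ (n : ℕ) (_ : p n), (n : ℕ∞) :=
      le_iInf₂ fun n hn => by exact_mod_cast Nat.succ_le_of_lt (not_le.1 fun h => hp n h hn)
    exact absurd (this.trans h) (by norm_cast; omega)
  · rintro ⟨n, hnm, hn⟩
    exact (iInf₂_le n hn).trans (by exact_mod_cast hnm)

lemma iInf_natCast_eq_natCast_iff {p : ℕ → Prop} {m : ℕ} :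
    ⨅ (n : ℕ) (_ : p n), (n : ℕ∞) = m ↔ p m ∧ ∀ k < m, ¬ p k := by
  constructor
  · intro h
    obtain ⟨n, hnm, hn⟩ := iInf_natCast_le_natCast_iff.1 h.le
    have hmn : m ≤ n := by exact_mod_cast h ▸ iInf₂_le n hn
    refine ⟨le_antisymm hnm hmn ▸ hn, fun k hk hpk => ?_⟩
    have : (m : ℕ∞) ≤ k := h ▸ iInf₂_le k hpk
    exact absurd this (by norm_cast; omega)
  · rintro ⟨hm, hmin⟩
    refine le_antisymm (iInf₂_le m hm) (le_iInf₂ fun n hn => ?_)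
    exact_mod_cast not_lt.1 fun h => hmin n h hn

def hitTime (x : ℕ → ℤ) (s : Set ℤ) (t : ℕ∞) : ℕ∞ :=
  ⨅ (n : ℕ) (_ : t ≤ n ∧ x n ∈ s), (n : ℕ∞)

section HitTime

variable {x : ℕ → ℤ} {s : Set ℤ} {t : ℕ∞}

lemma hitTime_le_natCast_iff {m : ℕ} : hitTime x s t ≤ m ↔ ∃ n ≤ m, t ≤ n ∧ x n ∈ s :=
  iInf_natCast_le_natCast_iff

lemma le_hitTime : t ≤ hitTime x s t :=
  le_iInf₂ fun _ hn => hn.1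

lemma hitTime_le {n : ℕ} (htn : t ≤ n) (hn : x n ∈ s) : hitTime x s t ≤ n :=
  iInf₂_le n ⟨htn, hn⟩

lemma notMem_of_lt_hitTime {k : ℕ} (htk : t ≤ k) (hk : (k : ℕ∞) < hitTime x s t) : x k ∉ s :=
  fun hks => (hitTime_le htk hks).not_gt hk

lemma hitTime_mem {m : ℕ} (h : hitTime x s t = m) : x m ∈ s :=
  (iInf_natCast_eq_natCast_iff.1 h).1.2

lemma hitTime_compl_Ioo_eq {a b : ℤ} (hx : ∀ k, x (k + 1) = x k + 1 ∨ x (k + 1) = x k - 1)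
    {m : ℕ} (h : hitTime x (Ioo a b)ᶜ t = m) (htm : t < m) : x m = a ∨ x m = b := by
  obtain ⟨k, rfl⟩ : ∃ k, m = k + 1 := Nat.exists_eq_succ_of_ne_zero (by rintro rfl; simp at htm)
  have htk : t ≤ k := Order.le_of_lt_add_one (by exact_mod_cast htm)
  have hk : x k ∈ Ioo a b :=
    not_not.1 <| notMem_of_lt_hitTime htk (by rw [h]; exact_mod_cast k.lt_succ_self)
  have hm := hitTime_mem h
  simp only [mem_compl_iff, mem_Ioo] at hk hm
  rcases hx k with h' | h' <;> omega

end HitTime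

/-- `firstExit x` and `secondExit x` are the times `ρ` and `τ` of the statement, evaluated on the
path `x`. -/
def firstExit (x : ℕ → ℤ) : ℕ∞ := hitTime x (Ioo (-1) 2)ᶜ 0

def secondExit (x : ℕ → ℤ) : ℕ∞ := hitTime x (Ioo (-3) 0)ᶜ (firstExit x)

section ExitPath

variable {x : ℕ → ℤ} (hx0 : x 0 = 0) (hx : ∀ k, x (k + 1) = x k + 1 ∨ x (k + 1) = x k - 1)
include hx0 hx

lemma firstExit_value {j : ℕ} (h : firstExit x = j) : x j = -1 ∨ x j = 2 := by
  refine hitTime_compl_Ioo_eq hx h (pos_iff_ne_zero.2 fun hj => ?_)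
  have := hitTime_mem h
  simp_all

lemma firstExit_bound {k : ℕ} (hk : (k : ℕ∞) ≤ firstExit x) : x k ∈ Icc (-1) 2 := by
  rcases hk.lt_or_eq with hk | hk
  · have := notMem_of_lt_hitTime zero_le hk
    simp only [mem_compl_iff, not_not, mem_Ioo] at this
    exact ⟨this.1.le, this.2.le⟩
  · rcases firstExit_value hx0 hx hk.symm with h | h <;> simp [h]

lemma secondExit_value {m : ℕ} (hm : secondExit x = m) :
    ∃ j : ℕ, firstExit x = j ∧
      ((x m = 2 ∧ x j = 2) ∨ ((x m = -3 ∨ x m = 0) ∧ x j = -1)) := by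
  have hjm : firstExit x ≤ m := hm ▸ le_hitTime
  obtain ⟨j, hj⟩ := ENat.ne_top_iff_exists.1 (ne_top_of_le_ne_top (ENat.natCast_ne_top m) hjm)
  refine ⟨j, hj.symm, ?_⟩
  rcases firstExit_value hx0 hx hj.symm with hj' | hj'
  · have hjm' : firstExit x < m := by
      refine lt_of_le_of_ne hjm fun h => ?_
      have := hitTime_mem hm
      simp_all
    refine Or.inr ⟨?_, hj'⟩
    rcases hitTime_compl_Ioo_eq hx hm hjm' with h | h <;> simp [h]
  · obtain rfl : m = j := by
      have : (m : ℕ∞) ≤ j := hm ▸ hitTime_le hj.ge (by simp [hj'])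
      exact_mod_cast le_antisymm this (hj ▸ hjm)
    exact Or.inl ⟨hj', hj'⟩

lemma secondExit_bound {k : ℕ} (hk : (k : ℕ∞) ≤ secondExit x) : x k ∈ Icc (-3) 2 := by
  rcases le_or_gt (k : ℕ∞) (firstExit x) with hkr | hrk
  · exact Icc_subset_Icc (by norm_num) le_rfl (firstExit_bound hx0 hx hkr)
  rcases hk.lt_or_eq with hk | hk
  · have := notMem_of_lt_hitTime hrk.le hk
    simp only [mem_compl_iff, not_not, mem_Ioo] at this
    exact ⟨this.1.le, this.2.le.trans (by norm_num)⟩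
  · obtain ⟨j, -, ⟨h, -⟩ | ⟨h | h, -⟩⟩ := secondExit_value hx0 hx hk.symm <;> simp [h]

end ExitPath

section FiniteRange

variable {P : Measure Ω} {f : Ω → ℤ} {S : Finset ℤ}

lemma integral_intCast_eq_sum_of_ae_mem [IsFiniteMeasure P] (hf : Measurable f)
    (hS : ∀ᵐ ω ∂P, f ω ∈ S) :
    ∫ ω, (f ω : ℝ) ∂P = ∑ v ∈ S, P.real (f ⁻¹' {v}) * v := by
  have hsum : (fun ω => (f ω : ℝ)) =ᵐ[P]
      fun ω => ∑ v ∈ S, (f ⁻¹' {v}).indicator (fun _ => (v : ℝ)) ω := by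
    filter_upwards [hS] with ω hω
    rw [Finset.sum_eq_single_of_mem (f ω) hω fun v _ hv => by simp [Ne.symm hv]]
    simp
  rw [integral_congr_ae hsum, integral_finsetSum _ fun v _ =>
    (integrable_const _).indicator (hf (measurableSet_singleton v))]
  simp_rw [integral_indicator_const _ (hf (measurableSet_singleton _)), smul_eq_mul]

lemma map_eq_sum_dirac_of_ae_mem (hf : Measurable f) (hS : ∀ᵐ ω ∂P, f ω ∈ S) :
    P.map f = ∑ v ∈ S, P (f ⁻¹' {v}) • Measure.dirac v := by
  refine Measure.ext_iff_singleton.2 fun a => ?_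
  rw [Measure.map_apply hf (measurableSet_singleton a), Measure.coe_finsetSum, Finset.sum_apply]
  simp only [Measure.smul_apply, Measure.dirac_apply, smul_eq_mul]
  by_cases ha : a ∈ S
  · rw [Finset.sum_eq_single_of_mem a ha fun v _ hv => by simp [hv]]
    simp
  · rw [Finset.sum_eq_zero fun v hv => by simp [show v ≠ a by rintro rfl; exact ha hv]]
    exact measure_mono_null (fun ω hω => by simp_all) (ae_iff.1 hS)

lemma sum_measureReal_preimage_of_ae_mem [IsProbabilityMeasure P] (hf : Measurable f)
    (hS : ∀ᵐ ω ∂P, f ω ∈ S) : ∑ v ∈ S, P.real (f ⁻¹' {v}) = 1 := by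
  have h := congrArg (fun ν => (ν univ).toReal) (map_eq_sum_dirac_of_ae_mem hf hS)
  simpa [Measure.map_apply hf .univ, ENNReal.toReal_sum, measureReal_def] using h.symm

end FiniteRange

lemma uniformIntegrable_of_ae_abs_le {P : Measure Ω} [IsFiniteMeasure P] {f : ℕ → Ω → ℝ}
    (hf : ∀ n, StronglyMeasurable (f n)) {K : ℝ} (hK : ∀ᵐ ω ∂P, ∀ n, |f n ω| ≤ K) :
    UniformIntegrable f 1 P := by
  refine uniformIntegrable_of le_rfl ENNReal.one_ne_top (fun n => (hf n).aestronglyMeasurable)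
    fun ε hε => ⟨K.toNNReal + 1, fun n => ?_⟩
  have hzero : {ω | K.toNNReal + 1 ≤ ‖f n ω‖₊}.indicator (f n) =ᵐ[P] 0 := by
    filter_upwards [hK] with ω hω
    rw [Pi.zero_apply, indicator_of_notMem]
    rw [mem_ofPred_eq, not_le, ← NNReal.coe_lt_coe, coe_nnnorm, Real.norm_eq_abs,
      NNReal.coe_add, NNReal.coe_one]
    linarith [hω n, Real.le_coe_toNNReal K]
  simp [eLpNorm_congr_ae hzero]

section Walk

variable {ξ : ℕ → Ω → ℤ}

omit [MeasurableSpace Ω] in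
lemma walk_zero (ξ : ℕ → Ω → ℤ) (ω : Ω) : walk ξ 0 ω = 0 := by
  simp [walk]

omit [MeasurableSpace Ω] in
lemma walk_succ (ξ : ℕ → Ω → ℤ) (n : ℕ) (ω : Ω) :
    walk ξ (n + 1) ω = walk ξ n ω + ξ (n + 1) ω :=
  Finset.sum_Icc_succ_top (Nat.le_add_left 1 n) _

lemma measurable_natFilt_walk {hm : ∀ k, Measurable (ξ k)} {k n : ℕ} (hk : k ≤ n) :
    Measurable[natFilt ξ hm n] (walk ξ k) :=
  Measurable.of_comap_le <|
    le_biSup (fun k => MeasurableSpace.comap (walk ξ k) inferInstance) (mem_Iic.2 hk)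

lemma natFilt_le_iSup_comap_steps (hm : ∀ k, Measurable (ξ k)) (n : ℕ) :
    natFilt ξ hm n ≤ ⨆ i ∈ Iic n, MeasurableSpace.comap (ξ i) inferInstance := by
  refine iSup₂_le fun k hk => Measurable.comap_le <| Finset.measurable_sum _ fun i hi => ?_
  exact Measurable.of_comap_le <| le_biSup (fun i => MeasurableSpace.comap (ξ i) inferInstance)
    (mem_Iic.2 ((Finset.mem_Icc.1 hi).2.trans hk))

lemma isStoppingTime_hitTime {hm : ∀ k, Measurable (ξ k)} {σ : Ω → ℕ∞}
    (hσ : IsStoppingTime (natFilt ξ hm) σ) (s : Set ℤ) :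
    IsStoppingTime (natFilt ξ hm) fun ω => hitTime (walk ξ · ω) s (σ ω) := by
  intro i
  change MeasurableSet[natFilt ξ hm i] {ω | hitTime (walk ξ · ω) s (σ ω) ≤ (i : ℕ∞)}
  have : {ω | hitTime (walk ξ · ω) s (σ ω) ≤ (i : ℕ∞)} =
      ⋃ n ≤ i, {ω | σ ω ≤ n} ∩ walk ξ n ⁻¹' s := by
    ext ω
    simp only [mem_ofPred_eq, hitTime_le_natCast_iff, mem_iUnion, mem_inter_iff, mem_preimage,
      exists_prop]
  rw [this]
  exact .biUnion (to_countable _) fun n hn =>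
    ((natFilt ξ hm).mono hn _ (hσ n)).inter (measurable_natFilt_walk hn trivial)

omit [MeasurableSpace Ω] in
lemma stopProc_eq_stoppedProcess (ξ : ℕ → Ω → ℤ) (σ : Ω → ℕ∞) :
    stopProc ξ σ = stoppedProcess (fun n ω => (walk ξ n ω : ℝ)) σ := by
  ext n ω
  obtain h | ⟨m, h⟩ : σ ω = ⊤ ∨ ∃ m : ℕ, σ ω = m := by cases σ ω <;> simp
  · simp only [stopProc, stoppedProcess, h, min_top_right]
    rfl
  · simp only [stopProc, stoppedProcess, h]
    rfl

omit [MeasurableSpace Ω] in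
lemma stopProc_zero (ξ : ℕ → Ω → ℤ) (σ : Ω → ℕ∞) : stopProc ξ σ 0 = 0 := by
  ext ω
  simp [stopProc, walk_zero]

omit [MeasurableSpace Ω] in
lemma stopProc_eq_stopVal {σ : Ω → ℕ∞} {ω : Ω} {m n : ℕ} (hσ : σ ω = m) (hmn : m ≤ n) :
    stopProc ξ σ n ω = stopVal ξ σ ω := by
  simp [stopProc, stopVal, hσ, hmn]

lemma ae_abs_stopProc_le {P : Measure Ω} {σ : Ω → ℕ∞} {K : ℝ}
    (hK : ∀ᵐ ω ∂P, ∀ k : ℕ, (k : ℕ∞) ≤ σ ω → |(walk ξ k ω : ℝ)| ≤ K) :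
    ∀ᵐ ω ∂P, ∀ n, |stopProc ξ σ n ω| ≤ K := by
  filter_upwards [hK] with ω hω n
  refine hω _ ?_
  rw [ENat.natCast_toNat (min_lt_of_left_lt (ENat.natCast_lt_top n)).ne]
  exact min_le_right _ _

end Walk

namespace IsSSRW

variable {P : Measure Ω} {ξ : ℕ → Ω → ℤ} (W : IsSSRW P ξ)
include W

lemma ae_step : ∀ᵐ ω ∂P, ∀ k, ξ k ω = 1 ∨ ξ k ω = -1 := by
  have := W.isProb
  refine ae_all_iff.2 fun k => ?_
  have hmeas : ∀ v, MeasurableSet {ω | ξ k ω = v} := fun v => W.meas k (measurableSet_singleton v)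
  have hdisj : Disjoint {ω | ξ k ω = 1} {ω | ξ k ω = -1} :=
    disjoint_left.2 fun ω (h1 : ξ k ω = 1) (h2 : ξ k ω = -1) => by omega
  rw [ae_iff_measure_eq (by simpa only [ofPred_or] using
    ((hmeas 1).union (hmeas (-1))).nullMeasurableSet), measure_univ, ofPred_or,
    measure_union hdisj (hmeas _), W.up, W.down, ENNReal.add_halves]

lemma ae_walk_succ :
    ∀ᵐ ω ∂P, ∀ k, walk ξ (k + 1) ω = walk ξ k ω + 1 ∨ walk ξ (k + 1) ω = walk ξ k ω - 1 := by
  filter_upwards [W.ae_step] with ω hω k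
  rw [walk_succ]
  rcases hω (k + 1) with h | h <;> simp [h, sub_eq_add_neg]

lemma integrable_step (k : ℕ) : Integrable (fun ω => (ξ k ω : ℝ)) P := by
  have := W.isProb
  refine .of_bound (C := 1) (measurable_from_top.comp (W.meas k)).aestronglyMeasurable ?_
  filter_upwards [W.ae_step] with ω hω
  rcases hω k with h | h <;> simp [h]

lemma integral_step (k : ℕ) : ∫ ω, (ξ k ω : ℝ) ∂P = 0 := by
  have := W.isProb
  have hS : ∀ᵐ ω ∂P, ξ k ω ∈ ({1, -1} : Finset ℤ) := by
    filter_upwards [W.ae_step] with ω hω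
    simpa using hω k
  have hup : P (ξ k ⁻¹' {1}) = 1 / 2 := W.up k
  have hdown : P (ξ k ⁻¹' {-1}) = 1 / 2 := W.down k
  rw [integral_intCast_eq_sum_of_ae_mem (W.meas k) hS, Finset.sum_pair (by decide)]
  simp [measureReal_def, hup, hdown]

lemma indep_step_natFilt (n : ℕ) :
    Indep (MeasurableSpace.comap (ξ (n + 1)) inferInstance) (natFilt ξ W.meas n) P := by
  refine indep_of_indep_of_le_right ?_ (natFilt_le_iSup_comap_steps W.meas n)
  simpa using indep_iSup_of_disjoint (fun i => (W.meas i).comap_le)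
    ((iIndepFun_iff_iIndep _ _ _).1 W.indep) (S := {n + 1}) (T := Iic n) (by simp)

lemma martingale_walk : Martingale (fun n ω => (walk ξ n ω : ℝ)) (natFilt ξ W.meas) P := by
  have := W.isProb
  have hint : ∀ n, Integrable (fun ω => (walk ξ n ω : ℝ)) P := fun n => by
    simpa [walk] using integrable_finsetSum _ fun k _ => W.integrable_step k
  have hadapt : StronglyAdapted (natFilt ξ W.meas) (fun n ω => (walk ξ n ω : ℝ)) :=
    fun n => (measurable_from_top.comp (measurable_natFilt_walk le_rfl)).stronglyMeasurable
  refine martingale_nat hadapt hint fun n => ?_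
  have hstep := condExp_indep_eq (f := fun ω => (ξ (n + 1) ω : ℝ))
    (W.meas (n + 1)).comap_le ((natFilt ξ W.meas).le n)
    (measurable_from_top.comp (comap_measurable (ξ (n + 1)))).stronglyMeasurable
    (W.indep_step_natFilt n)
  simp_rw [walk_succ, Int.cast_add]
  filter_upwards [condExp_add (hint n) (W.integrable_step (n + 1)) (natFilt ξ W.meas n), hstep]
    with ω h1 h2
  rw [← Pi.add_def, h1, Pi.add_apply, h2, W.integral_step,
    condExp_of_stronglyMeasurable ((natFilt ξ W.meas).le n) (hadapt n) (hint n), add_zero]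

variable {σ : Ω → ℕ∞} (hσ : IsStoppingTime (natFilt ξ W.meas) σ)
include hσ

lemma martingale_stopProc : Martingale (stopProc ξ σ) (natFilt ξ W.meas) P := by
  have := W.isProb
  have hX := W.martingale_walk
  rw [stopProc_eq_stoppedProcess]
  refine martingale_iff.2 ⟨?_, hX.submartingale.stoppedProcess hσ⟩
  convert (hX.neg.submartingale.stoppedProcess hσ).neg using 1
  ext n ω
  simp [stoppedProcess]

lemma measurable_stopVal : Measurable (stopVal ξ σ) := by
  have hwalk : Measurable fun p : Ω × ℕ => walk ξ p.2 p.1 :=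
    measurable_from_prod_countable_left fun n => measurable_walk ξ W.meas n
  have hσ' : Measurable fun ω => (σ ω).toNat :=
    (measurable_of_countable fun t : WithTop ℕ => ENat.toNat t).comp hσ.measurable'
  exact hwalk.comp (measurable_id.prodMk hσ')

variable {K : ℝ} (hK : ∀ᵐ ω ∂P, ∀ k : ℕ, (k : ℕ∞) ≤ σ ω → |(walk ξ k ω : ℝ)| ≤ K)
include hK

lemma aeFinite_of_bdd : AEFinite P σ := by
  have := W.isProb
  have hbdd : ∀ n, eLpNorm (stopProc ξ σ n) 1 P ≤ ENNReal.ofReal K := fun n => by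
    simpa using eLpNorm_le_of_ae_bound (p := 1) ((ae_abs_stopProc_le hK).mono fun ω h => h n)
  filter_upwards [(W.martingale_stopProc hσ).submartingale.exists_ae_tendsto_of_bdd hbdd,
    W.ae_walk_succ] with ω ⟨c, hc⟩ hstep
  refine lt_top_iff_ne_top.2 fun hσω => ?_
  have hwalk : Tendsto (fun n => (walk ξ n ω : ℝ)) atTop (𝓝 c) := by
    simpa [stopProc, hσω] using hc
  have hdiff := (hwalk.comp (tendsto_add_atTop_nat 1)).sub hwalk
  rw [sub_self] at hdiff
  obtain ⟨n, hn⟩ := (hdiff.eventually (Metric.ball_mem_nhds 0 one_pos)).exists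
  have : |(walk ξ (n + 1) ω : ℝ) - walk ξ n ω| = 1 := by
    rcases hstep n with h | h <;> simp [h]
  simp [this] at hn

lemma integral_stopVal_eq_zero : ∫ ω, (stopVal ξ σ ω : ℝ) ∂P = 0 := by
  have := W.isProb
  have hM := W.martingale_stopProc hσ
  have hlim : Tendsto (fun n => ∫ ω, stopProc ξ σ n ω ∂P) atTop
      (𝓝 (∫ ω, (stopVal ξ σ ω : ℝ) ∂P)) := by
    refine tendsto_integral_of_dominated_convergence (fun _ => K)
      (fun n => ((hM.stronglyMeasurable n).mono ((natFilt ξ W.meas).le n)).aestronglyMeasurable)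
      (integrable_const K) (fun n => (ae_abs_stopProc_le hK).mono fun ω h => h n) ?_
    filter_upwards [W.aeFinite_of_bdd hσ hK] with ω hω
    obtain ⟨m, hm⟩ := ENat.ne_top_iff_exists.1 hω.ne
    exact tendsto_atTop_of_eventually_const fun n hn => stopProc_eq_stopVal hm.symm hn
  have hzero : ∀ n, ∫ ω, stopProc ξ σ n ω ∂P = 0 := fun n => by
    rw [← setIntegral_univ, ← hM.setIntegral_eq (Nat.zero_le n) .univ, stopProc_zero]
    simp
  simp_rw [hzero] at hlim
  exact tendsto_nhds_unique hlim tendsto_const_nhds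

lemma uniformIntegrable_stopProc : UniformIntegrable (stopProc ξ σ) 1 P := by
  have := W.isProb
  exact uniformIntegrable_of_ae_abs_le
    (fun n => ((W.martingale_stopProc hσ).stronglyMeasurable n).mono ((natFilt ξ W.meas).le n))
    (ae_abs_stopProc_le hK)

end IsSSRW

def firstExitTime (ξ : ℕ → Ω → ℤ) (ω : Ω) : ℕ∞ := firstExit (walk ξ · ω)

def secondExitTime (ξ : ℕ → Ω → ℤ) (ω : Ω) : ℕ∞ := secondExit (walk ξ · ω)

lemma isStoppingTime_firstExitTime {ξ : ℕ → Ω → ℤ} (hm : ∀ k, Measurable (ξ k)) :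
    IsStoppingTime (natFilt ξ hm) (firstExitTime ξ) :=
  isStoppingTime_hitTime (isStoppingTime_const _ 0) _

lemma isStoppingTime_secondExitTime {ξ : ℕ → Ω → ℤ} (hm : ∀ k, Measurable (ξ k)) :
    IsStoppingTime (natFilt ξ hm) (secondExitTime ξ) :=
  isStoppingTime_hitTime (isStoppingTime_firstExitTime hm) _

def chaconWalshLaw : Measure ℤ :=
  (2 / 9 : ℝ≥0∞) • Measure.dirac (-3 : ℤ) +
    (4 / 9 : ℝ≥0∞) • Measure.dirac (0 : ℤ) + (1 / 3 : ℝ≥0∞) • Measure.dirac (2 : ℤ)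

lemma chaconWalshLaw_barycentre :
    (∑' n : ℕ, (n : ℝ) * (chaconWalshLaw {(n : ℤ)}).toReal) /
      (chaconWalshLaw {n : ℤ | 0 ≤ n}).toReal = 6 / 7 := by
  have hnum : ∑' n : ℕ, (n : ℝ) * (chaconWalshLaw {(n : ℤ)}).toReal = 2 / 3 := by
    rw [tsum_eq_single 2 fun n hn => ?_]
    · simp [chaconWalshLaw]
      norm_num
    · rcases Nat.eq_zero_or_pos n with rfl | hpos
      · simp
      · simp [chaconWalshLaw, show (0 : ℤ) ≠ n by omega, show (2 : ℤ) ≠ n by omega]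
  have hden : (chaconWalshLaw {n : ℤ | 0 ≤ n}).toReal = 7 / 9 := by
    simp [chaconWalshLaw, Measure.dirac_apply']
    rw [ENNReal.toReal_add (ENNReal.div_ne_top (by simp) (by simp)) (by simp)]
    simp [ENNReal.toReal_div]
    norm_num
  rw [hnum, hden]
  norm_num

namespace IsSSRW

variable {P : Measure Ω} {ξ : ℕ → Ω → ℤ} (W : IsSSRW P ξ)
include W

lemma ae_abs_walk_le_of_le_firstExitTime :
    ∀ᵐ ω ∂P, ∀ k : ℕ, (k : ℕ∞) ≤ firstExitTime ξ ω → |(walk ξ k ω : ℝ)| ≤ 2 := by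
  filter_upwards [W.ae_walk_succ] with ω hω k hk
  have := firstExit_bound (x := (walk ξ · ω)) (walk_zero ξ ω) hω hk
  have h : |walk ξ k ω| ≤ 2 := abs_le.2 ⟨by linarith [this.1], this.2⟩
  exact_mod_cast h

lemma ae_abs_walk_le_of_le_secondExitTime :
    ∀ᵐ ω ∂P, ∀ k : ℕ, (k : ℕ∞) ≤ secondExitTime ξ ω → |(walk ξ k ω : ℝ)| ≤ 3 := by
  filter_upwards [W.ae_walk_succ] with ω hω k hk
  have := secondExit_bound (x := (walk ξ · ω)) (walk_zero ξ ω) hω hk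
  have h : |walk ξ k ω| ≤ 3 := abs_le.2 ⟨this.1, by linarith [this.2]⟩
  exact_mod_cast h

lemma ae_stopVal_firstExitTime_mem :
    ∀ᵐ ω ∂P, stopVal ξ (firstExitTime ξ) ω ∈ ({-1, 2} : Finset ℤ) := by
  filter_upwards [W.aeFinite_of_bdd (isStoppingTime_firstExitTime W.meas)
    W.ae_abs_walk_le_of_le_firstExitTime, W.ae_walk_succ] with ω hfin hω
  obtain ⟨m, hm⟩ := ENat.ne_top_iff_exists.1 hfin.ne
  have := firstExit_value (x := (walk ξ · ω)) (walk_zero ξ ω) hω hm.symm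
  simpa [stopVal, ← hm] using this

lemma measureReal_stopVal_firstExitTime_eq_two :
    P.real (stopVal ξ (firstExitTime ξ) ⁻¹' {2}) = 1 / 3 := by
  have := W.isProb
  have hρ := isStoppingTime_firstExitTime W.meas
  have hS := W.ae_stopVal_firstExitTime_mem
  have hint := W.integral_stopVal_eq_zero hρ W.ae_abs_walk_le_of_le_firstExitTime
  have hsum := sum_measureReal_preimage_of_ae_mem (W.measurable_stopVal hρ) hS
  rw [integral_intCast_eq_sum_of_ae_mem (W.measurable_stopVal hρ) hS] at hint
  simp only [Finset.sum_pair (by decide : (-1 : ℤ) ≠ 2)] at hint hsum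
  push_cast at hint
  linarith

lemma ae_stopVal_secondExitTime : ∀ᵐ ω ∂P,
    (stopVal ξ (secondExitTime ξ) ω = 2 ∧ stopVal ξ (firstExitTime ξ) ω = 2) ∨
      ((stopVal ξ (secondExitTime ξ) ω = -3 ∨ stopVal ξ (secondExitTime ξ) ω = 0) ∧
        stopVal ξ (firstExitTime ξ) ω = -1) := by
  filter_upwards [W.aeFinite_of_bdd (isStoppingTime_secondExitTime W.meas)
    W.ae_abs_walk_le_of_le_secondExitTime, W.ae_walk_succ] with ω hfin hω
  obtain ⟨m, hm⟩ := ENat.ne_top_iff_exists.1 hfin.ne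
  obtain ⟨j, hj, hval⟩ := secondExit_value (x := (walk ξ · ω)) (walk_zero ξ ω) hω hm.symm
  have hτω : secondExitTime ξ ω = m := hm.symm
  have hρω : firstExitTime ξ ω = j := hj
  simpa [stopVal, hτω, hρω] using hval

lemma map_stopVal_secondExitTime :
    P.map (stopVal ξ (secondExitTime ξ)) = chaconWalshLaw := by
  have := W.isProb
  have hτ := isStoppingTime_secondExitTime W.meas
  have hmeas := W.measurable_stopVal hτ
  have hS : ∀ᵐ ω ∂P, stopVal ξ (secondExitTime ξ) ω ∈ ({-3, 0, 2} : Finset ℤ) := by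
    filter_upwards [W.ae_stopVal_secondExitTime] with ω h
    rcases h with ⟨h, -⟩ | ⟨h | h, -⟩ <;> simp [h]
  have htwo : P.real (stopVal ξ (secondExitTime ξ) ⁻¹' {2}) = 1 / 3 := by
    rw [← W.measureReal_stopVal_firstExitTime_eq_two]
    refine measureReal_congr (Eventually.set_eq ?_)
    filter_upwards [W.ae_stopVal_secondExitTime] with ω h
    simp only [mem_preimage, mem_singleton_iff]
    rcases h with ⟨h, h'⟩ | ⟨h | h, h'⟩ <;> simp [h, h']
  have hint := W.integral_stopVal_eq_zero hτ W.ae_abs_walk_le_of_le_secondExitTime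
  have hsum := sum_measureReal_preimage_of_ae_mem hmeas hS
  rw [integral_intCast_eq_sum_of_ae_mem hmeas hS] at hint
  simp only [Finset.sum_insert (by decide : (-3 : ℤ) ∉ ({0, 2} : Finset ℤ)),
    Finset.sum_pair (by decide : (0 : ℤ) ≠ 2)] at hint hsum
  push_cast at hint
  have hthree : P.real (stopVal ξ (secondExitTime ξ) ⁻¹' {-3}) = 2 / 9 := by linarith
  have hzero : P.real (stopVal ξ (secondExitTime ξ) ⁻¹' {0}) = 4 / 9 := by linarith
  rw [map_eq_sum_dirac_of_ae_mem hmeas hS, Finset.sum_insert (by decide),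
    Finset.sum_pair (by decide), ← add_assoc, chaconWalshLaw]
  rw [← ofReal_measureReal, ← ofReal_measureReal, ← ofReal_measureReal, htwo, hthree, hzero]
  norm_num [ENNReal.ofReal_div_of_pos]

end IsSSRW

/-- The measure `μ = (2/9)δ₋₃ + (4/9)δ₀ + (1/3)δ₂` is embedded by the
Chacon–Walsh stopping time `τ = inf {n ≥ ρ : X n ∉ (-3,0)}`, where
`ρ = inf {n : X n ∉ (-1,2)}`; the stopped process is a UI martingale, although the
barycentre value `Ψ_μ(0) = 6/7` is not an integer. -/
theorem chacon_walsh_but_not_azema_yor_example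
    {Ω : Type*} [MeasurableSpace Ω] (P : Measure Ω) (ξ : ℕ → Ω → ℤ)
    (W : IsSSRW P ξ) (μ : Measure ℤ)
    (hμ : μ = (2 / 9 : ℝ≥0∞) • Measure.dirac (-3 : ℤ) +
      (4 / 9 : ℝ≥0∞) • Measure.dirac (0 : ℤ) + (1 / 3 : ℝ≥0∞) • Measure.dirac (2 : ℤ))
    (ρ : Ω → ℕ∞)
    (hρ : ρ = fun ω => ⨅ (n : ℕ) (_ : walk ξ n ω ∉ Set.Ioo (-1 : ℤ) 2), (n : ℕ∞))
    (τ : Ω → ℕ∞)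
    (hτ : τ = fun ω => ⨅ (n : ℕ)
      (_ : ρ ω ≤ (n : ℕ∞) ∧ walk ξ n ω ∉ Set.Ioo (-3 : ℤ) 0), (n : ℕ∞)) :
    AEFinite P τ ∧ Embeds P ξ τ μ ∧
      Martingale (stopProc ξ τ) (natFilt ξ W.meas) P ∧
      UniformIntegrable (stopProc ξ τ) 1 P ∧
      (∑' n : ℕ, (n : ℝ) * (μ {(n : ℤ)}).toReal) / (μ {n : ℤ | 0 ≤ n}).toReal = 6 / 7 ∧
      ¬ ∃ m : ℤ, ((6 : ℝ) / 7) = (m : ℝ) := by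
  have hρ' : ρ = firstExitTime ξ := by
    ext ω
    simp [hρ, firstExitTime, firstExit, hitTime]
  obtain rfl : τ = secondExitTime ξ := by
    rw [hτ, hρ']
    rfl
  obtain rfl : μ = chaconWalshLaw := hμ
  have hτ := isStoppingTime_secondExitTime W.meas
  have hK := W.ae_abs_walk_le_of_le_secondExitTime
  refine ⟨W.aeFinite_of_bdd hτ hK, W.map_stopVal_secondExitTime, W.martingale_stopProc hτ,
    W.uniformIntegrable_stopProc hτ hK, chaconWalshLaw_barycentre, ?_⟩
  rintro ⟨m, hm⟩
  have : (6 : ℤ) = 7 * m := by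
    rw [div_eq_iff (by norm_num)] at hm
    exact_mod_cast hm.trans (mul_comm _ _)
  omega

end RWSkorokhod
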